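/- Let x₀ ∈ ℝ^d be nonzero with support T, C = { sgn(x₀) + u : supp u ∩ T = ∅, ‖u‖_∞ ≤ 1 }, (S_i)_{i=1}^k a partition of {1,…,d}, and Δ^v = diag(Σ_i v_i 1_{S_i}) for v ∈ ℝ_+^k. Then for every fixed u ∈ ℝ^d, the function v ↦ dist(u, Δ^v C) is convex on ℝ_+^k. -/

import Mathlib

/-! The set `{(v, y) | v ≥ 0, y ∈ Δ^v C}` is convex: `C` is a product of intervals, so
coordinatewise `a λ p + b μ q = (a λ + b μ) r` with `r` in the same interval. The distance from a
fixed point to the fibres of a set-valued map with convex graph is a convex function, because a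
convex combination of near-minimisers in two fibres lies in the fibre over the combined parameter. -/

open MeasureTheory ProbabilityTheory
open scoped Pointwise BigOperators

noncomputable section

/-- The diagonal entries of `Δ^v = diag(∑ i, v i • 𝟏_{S i})`. -/
def blockWeight {d k : ℕ} (S : Fin k → Finset (Fin d)) (v : Fin k → ℝ) (j : Fin d) : ℝ :=
  ∑ i, if j ∈ S i then v i else 0

/-- The linear map given by the diagonal matrix `Δ^v`. -/
def deltaMap {d k : ℕ} (S : Fin k → Finset (Fin d)) (v : Fin k → ℝ)
    (p : EuclideanSpace ℝ (Fin d)) : EuclideanSpace ℝ (Fin d) :=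
  WithLp.toLp 2 (fun j => blockWeight S v j * p j)

/-- The sign vector of `x₀` (with `sgn 0 = 0`). -/
def sgnVec {d : ℕ} (x₀ : EuclideanSpace ℝ (Fin d)) : EuclideanSpace ℝ (Fin d) :=
  WithLp.toLp 2 (fun j => Real.sign (x₀ j))

/-- The subdifferential of the ℓ1-norm at `x₀`:
`C = { sgn x₀ + u : supp u ∩ supp x₀ = ∅, ‖u‖_∞ ≤ 1 }`. -/
def Cset {d : ℕ} (x₀ : EuclideanSpace ℝ (Fin d)) : Set (EuclideanSpace ℝ (Fin d)) :=
  {p | ∃ u : EuclideanSpace ℝ (Fin d),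
    (∀ j, x₀ j ≠ 0 → u j = 0) ∧ (∀ j, |u j| ≤ 1) ∧ p = sgnVec x₀ + u}

/-- The subdifferential of `|·|` at `t`: `Cset x₀` is the product of these sets. -/
def absSubdiff (t : ℝ) : Set ℝ :=
  if t = 0 then Set.Icc (-1) 1 else {Real.sign t}

lemma convex_absSubdiff (t : ℝ) : Convex ℝ (absSubdiff t) := by
  unfold absSubdiff
  split_ifs
  exacts [convex_Icc _ _, convex_singleton _]

lemma mem_Cset_iff {d : ℕ} {x₀ p : EuclideanSpace ℝ (Fin d)} :
    p ∈ Cset x₀ ↔ ∀ j, p j ∈ absSubdiff (x₀ j) := by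
  constructor
  · rintro ⟨u, hu0, hu1, rfl⟩ j
    by_cases hj : x₀ j = 0
    · simpa [absSubdiff, sgnVec, hj, abs_le] using hu1 j
    · simp [absSubdiff, sgnVec, hj, hu0 j hj]
  · intro hp
    refine ⟨p - sgnVec x₀, fun j hj => ?_, fun j => ?_, (add_sub_cancel _ _).symm⟩
    · simpa [absSubdiff, sgnVec, hj, sub_eq_zero] using hp j
    · have hpj := hp j
      by_cases hj : x₀ j = 0
      · simpa [absSubdiff, sgnVec, hj, abs_le] using hpj
      · simp_all [absSubdiff, sgnVec]

lemma sgnVec_mem_Cset {d : ℕ} (x₀ : EuclideanSpace ℝ (Fin d)) : sgnVec x₀ ∈ Cset x₀ :=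
  ⟨0, fun _ _ => rfl, fun _ => by norm_num, by simp⟩

lemma blockWeight_nonneg {d k : ℕ} (S : Fin k → Finset (Fin d)) {v : Fin k → ℝ}
    (hv : ∀ i, 0 ≤ v i) (j : Fin d) : 0 ≤ blockWeight S v j :=
  Finset.sum_nonneg fun i _ => by split <;> simp [hv i]

lemma blockWeight_smul_add {d k : ℕ} (S : Fin k → Finset (Fin d)) (v w : Fin k → ℝ)
    (a b : ℝ) (j : Fin d) :
    blockWeight S (a • v + b • w) j = a * blockWeight S v j + b * blockWeight S w j := by
  simp only [blockWeight, Finset.mul_sum, mul_ite, mul_zero, ← Finset.sum_add_distrib]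
  exact Finset.sum_congr rfl fun i _ => by split <;> simp

lemma smul_image_deltaMap_add_subset {d k : ℕ} (x₀ : EuclideanSpace ℝ (Fin d))
    (S : Fin k → Finset (Fin d)) {v w : Fin k → ℝ} (hv : ∀ i, 0 ≤ v i) (hw : ∀ i, 0 ≤ w i)
    {a b : ℝ} (ha : 0 ≤ a) (hb : 0 ≤ b) :
    a • (deltaMap S v '' Cset x₀) + b • (deltaMap S w '' Cset x₀) ⊆
      deltaMap S (a • v + b • w) '' Cset x₀ := by
  rintro _ ⟨_, ⟨_, ⟨p, hp, rfl⟩, rfl⟩, _, ⟨_, ⟨q, hq, rfl⟩, rfl⟩, rfl⟩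
  rw [mem_Cset_iff] at hp hq
  have hcoord : ∀ j, ∃ r ∈ absSubdiff (x₀ j), blockWeight S (a • v + b • w) j * r =
      a * (blockWeight S v j * p j) + b * (blockWeight S w j * q j) := fun j => by
    obtain ⟨r, hr, hrpq⟩ := (convex_absSubdiff (x₀ j)).exists_mem_add_smul_eq (hp j) (hq j)
      (mul_nonneg ha (blockWeight_nonneg S hv j)) (mul_nonneg hb (blockWeight_nonneg S hw j))
    refine ⟨r, hr, ?_⟩
    simp only [smul_eq_mul] at hrpq
    rw [blockWeight_smul_add, hrpq]
    ring
  choose r hr hrpq using hcoord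
  refine ⟨WithLp.toLp 2 r, mem_Cset_iff.2 hr, ?_⟩
  ext j
  simp [deltaMap, hrpq]

section InfDist

variable {E F : Type*} [AddCommGroup E] [Module ℝ E] [NormedAddCommGroup F] [NormedSpace ℝ F]

lemma infDist_le_of_smul_add_subset {A B T : Set F} (hA : A.Nonempty) (hB : B.Nonempty)
    {a b : ℝ} (ha : 0 ≤ a) (hb : 0 ≤ b) (hab : a + b = 1) (hT : a • A + b • B ⊆ T) (u : F) :
    Metric.infDist u T ≤ a * Metric.infDist u A + b * Metric.infDist u B := by
  refine le_of_forall_pos_le_add fun ε hε => ?_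
  obtain ⟨y, hy, hyu⟩ := (Metric.infDist_lt_iff hA).1 (lt_add_of_pos_right (Metric.infDist u A) hε)
  obtain ⟨z, hz, hzu⟩ := (Metric.infDist_lt_iff hB).1 (lt_add_of_pos_right (Metric.infDist u B) hε)
  calc Metric.infDist u T ≤ dist u (a • y + b • z) :=
        Metric.infDist_le_dist_of_mem
          (hT (Set.add_mem_add (Set.smul_mem_smul_set hy) (Set.smul_mem_smul_set hz)))
    _ = dist (a • y + b • z) u := dist_comm _ _
    _ ≤ a * dist y u + b * dist z u :=
        (convexOn_univ_dist u).2 trivial trivial ha hb hab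
    _ ≤ a * (Metric.infDist u A + ε) + b * (Metric.infDist u B + ε) := by
        rw [dist_comm y, dist_comm z]
        gcongr
    _ = a * Metric.infDist u A + b * Metric.infDist u B + ε := by
        linear_combination ε * hab

lemma convexOn_infDist_of_smul_add_subset {D : Set E} {s : E → Set F} (hD : Convex ℝ D)
    (hne : ∀ v ∈ D, (s v).Nonempty)
    (hs : ∀ ⦃v⦄, v ∈ D → ∀ ⦃w⦄, w ∈ D → ∀ ⦃a b : ℝ⦄, 0 ≤ a → 0 ≤ b → a + b = 1 →
      a • s v + b • s w ⊆ s (a • v + b • w)) (u : F) :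
    ConvexOn ℝ D fun v => Metric.infDist u (s v) :=
  ⟨hD, fun _ hv _ hw _ _ ha hb hab =>
    infDist_le_of_smul_add_subset (hne _ hv) (hne _ hw) ha hb hab (hs hv hw ha hb hab) u⟩

end InfDist

theorem dist_to_scaled_image_convexOn_general {d k : ℕ}
    (x₀ : EuclideanSpace ℝ (Fin d))
    (S : Fin k → Finset (Fin d))
    (u : EuclideanSpace ℝ (Fin d)) :
    ConvexOn ℝ {v : Fin k → ℝ | ∀ i, 0 ≤ v i}
      (fun v => Metric.infDist u (deltaMap S v '' Cset x₀)) := by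
  have horthant : Convex ℝ {v : Fin k → ℝ | ∀ i, 0 ≤ v i} := convex_Ici 0
  exact convexOn_infDist_of_smul_add_subset (s := fun v => deltaMap S v '' Cset x₀) horthant
    (fun _ _ => ⟨_, sgnVec x₀, sgnVec_mem_Cset x₀, rfl⟩)
    (fun _ hv _ hw _ _ ha hb _ => smul_image_deltaMap_add_subset x₀ S hv hw ha hb) u

theorem dist_to_scaled_image_convexOn {d k : ℕ}
    (x₀ : EuclideanSpace ℝ (Fin d)) (hx₀ : x₀ ≠ 0)
    (S : Fin k → Finset (Fin d))
    (hdisj : ∀ i₁ i₂, i₁ ≠ i₂ → Disjoint (S i₁) (S i₂))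
    (hcover : ∀ j, ∃ i, j ∈ S i)
    (u : EuclideanSpace ℝ (Fin d)) :
    ConvexOn ℝ {v : Fin k → ℝ | ∀ i, 0 ≤ v i}
      (fun v => Metric.infDist u (deltaMap S v '' Cset x₀)) :=
  dist_to_scaled_image_convexOn_general x₀ S u

end
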